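/- Let G be a graph of treewidth at most k and let W be a set of vertices of G. Then there exists a set S of at most k+1 vertices of G such that every connected component of G − S contains at most |W|/2 vertices of W. -/

import Mathlib

open SimpleGraph

/-- A rooted tree decomposition of a graph `G` with node type `ι`. -/
structure RootedTD (V : Type) (G : SimpleGraph V) (ι : Type) where
  T : SimpleGraph ι
  tree : T.IsTree
  bag : ι → Finset V
  root : ι
  parent : ι → ι
  parent_root : parent root = root
  parent_adj : ∀ x, x ≠ root → T.Adj x (parent x)
  parent_reach : ∀ x, ∃ n, parent^[n] x = root
  vert_cover : ∀ v, ∃ x, v ∈ bag x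
  edge_cover : ∀ ⦃u v⦄, G.Adj u v → ∃ x, u ∈ bag x ∧ v ∈ bag x
  conn : ∀ (v : V) (x y : ι) (w : T.Walk x y), w.IsPath →
      v ∈ bag x → v ∈ bag y → ∀ z ∈ w.support, v ∈ bag z

/-- The treewidth of G is at most k. -/
def treewidthLE (V : Type) (G : SimpleGraph V) (k : ℕ) : Prop :=
  ∃ (m : ℕ) (D : RootedTD V G (Fin m)), ∀ x, (D.bag x).card ≤ k + 1


/-- The graph G with the vertices of S deleted (kept on the same vertex type,
with vertices of S isolated). -/
def deleteVerts {V : Type} (G : SimpleGraph V) (S : Finset V) : SimpleGraph V where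
  Adj u v := G.Adj u v ∧ u ∉ S ∧ v ∉ S
  symm := ⟨fun u v h => ⟨h.1.symm, h.2.2, h.2.1⟩⟩
  loopless := ⟨fun v h => G.loopless.1 v h.1⟩


/-!
Root the tree decomposition and call a vertex of `G` confined to a node `x` when all of its
bags lie in the subtree of `x`. Among the nodes to which at least half of `W` is confined, pick
one of maximal depth, `x`, and take `S` to be its bag. A walk of `G - S` only passes through
bags other than that of `x`, and the bags of a vertex outside `S` form a subtree avoiding `x`, so
a component of `G - S` either lives entirely in the subtree of one child `c` of `x`, and then
meets `W` only in the fewer than `|W|/2` vertices confined to `c`, or entirely outside the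
subtree of `x`, and then avoids the at least `|W|/2` vertices confined to `x`.
-/


theorem SimpleGraph.Walk.apply_end_of_closed {α : Type} {H : SimpleGraph α} {s P : α → Prop}
    (hP : ∀ ⦃a b⦄, H.Adj a b → s a → s b → P a → P b) {u v : α} (p : H.Walk u v)
    (hs : ∀ a ∈ p.support, s a) (hu : P u) : P v := by
  induction p with
  | nil => exact hu
  | cons hadj p ih =>
    refine ih (fun a ha => hs a (List.mem_cons_of_mem _ ha)) (hP hadj (hs _ ?_) (hs _ ?_) hu)
    · exact List.mem_cons_self
    · exact List.mem_cons_of_mem _ p.start_mem_support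

namespace RootedTD

variable {V : Type} {G : SimpleGraph V} {ι : Type} (D : RootedTD V G ι)

def InSubtree (x y : ι) : Prop := ∃ n, D.parent^[n] y = x

open Classical in
noncomputable def depth (a : ι) : ℕ := Nat.find (D.parent_reach a)

def confined (x : ι) : Set V := {v | ∀ y, v ∈ D.bag y → D.InSubtree x y}

lemma reachable_root {H : SimpleGraph ι} (hH : ∀ a, a ≠ D.root → H.Adj a (D.parent a))
    (a : ι) : H.Reachable a D.root := by
  obtain ⟨n, hn⟩ := D.parent_reach a
  induction n generalizing a with
  | zero => exact hn ▸ .refl a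
  | succ n ih =>
    rw [Function.iterate_succ_apply] at hn
    by_cases ha : a = D.root
    · exact ha ▸ .refl _
    · exact (hH a ha).reachable.trans (ih _ hn)

/-- Every edge of the tree is a parent edge: the parent edges alone already connect the tree,
so an edge of the tree that is not one of them would not be a bridge. -/
lemma parent_eq_or_parent_eq_of_adj {y z : ι} (h : D.T.Adj y z) :
    D.parent y = z ∨ D.parent z = y := by
  by_contra! hne
  have hbridge : D.T.IsBridge s(y, z) := isAcyclic_iff_forall_isBridge.mp D.tree.isAcyclic h
  have hparent : ∀ a, a ≠ D.root → (D.T.deleteEdges {s(y, z)}).Adj a (D.parent a) := by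
    intro a ha
    refine (deleteEdges_adj ..).mpr ⟨D.parent_adj a ha, ?_⟩
    simp only [Set.mem_singleton_iff, Sym2.eq_iff]
    rintro (⟨rfl, hp⟩ | ⟨rfl, hp⟩)
    exacts [hne.1 hp, hne.2 hp]
  exact isBridge_iff.mp hbridge ((D.reachable_root hparent y).trans
    (D.reachable_root hparent z).symm)

lemma inSubtree_root (y : ι) : D.InSubtree D.root y := D.parent_reach y

lemma inSubtree_parent {x y : ι} (h : D.InSubtree x y) (hyx : y ≠ x) :
    D.InSubtree x (D.parent y) := by
  obtain ⟨_ | n, hn⟩ := h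
  · exact absurd hn hyx
  · exact ⟨n, by rwa [Function.iterate_succ_apply] at hn⟩

lemma inSubtree_of_inSubtree_parent {x y : ι} (h : D.InSubtree x (D.parent y)) :
    D.InSubtree x y := by
  obtain ⟨n, hn⟩ := h
  exact ⟨n + 1, by rwa [Function.iterate_succ_apply]⟩

lemma inSubtree_of_adj {x y z : ι} (h : D.InSubtree x y) (hadj : D.T.Adj y z) (hyx : y ≠ x) :
    D.InSubtree x z := by
  rcases D.parent_eq_or_parent_eq_of_adj hadj with rfl | hz
  · exact D.inSubtree_parent h hyx
  · exact D.inSubtree_of_inSubtree_parent (hz ▸ h)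

lemma inSubtree_of_adj_of_ne_parent {x y z : ι} (h : D.InSubtree x y) (hadj : D.T.Adj y z)
    (hz : z ≠ D.parent x) : D.InSubtree x z := by
  by_cases hyx : y = x
  · subst hyx
    rcases D.parent_eq_or_parent_eq_of_adj hadj with hy | hy
    · exact absurd hy.symm hz
    · exact ⟨1, hy⟩
  · exact D.inSubtree_of_adj h hadj hyx

lemma exists_child_inSubtree {x y : ι} (h : D.InSubtree x y) (hyx : y ≠ x) :
    ∃ c, D.parent c = x ∧ c ≠ x ∧ D.InSubtree c y := by
  obtain ⟨n, hn⟩ := h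
  induction n generalizing y with
  | zero => exact absurd hn hyx
  | succ n ih =>
    rw [Function.iterate_succ_apply] at hn
    by_cases hpy : D.parent y = x
    · exact ⟨y, hpy, hyx, 0, rfl⟩
    · obtain ⟨c, hcx, hc, hcy⟩ := ih hpy hn
      exact ⟨c, hcx, hc, D.inSubtree_of_inSubtree_parent hcy⟩

lemma depth_lt_depth_of_parent_eq {x c : ι} (hcx : D.parent c = x) (hc : c ≠ x) :
    D.depth x < D.depth c := by
  classical
  have hroot : D.parent^[D.depth c] c = D.root := Nat.find_spec (D.parent_reach c)
  obtain ⟨k, hk⟩ : ∃ k, D.depth c = k + 1 := by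
    refine Nat.exists_eq_succ_of_ne_zero fun h0 => hc ?_
    rw [h0] at hroot
    rw [← hcx, show c = D.root from hroot, D.parent_root]
  rw [hk, Function.iterate_succ_apply, hcx] at hroot
  exact hk ▸ Nat.lt_succ_of_le (Nat.find_min' _ hroot)

/-- The bags containing `v` span a subtree avoiding `x`. -/
lemma forall_mem_bag_of_mem_bag {x : ι} {P : ι → Prop}
    (hP : ∀ ⦃y z⦄, D.T.Adj y z → y ≠ x → z ≠ x → P y → P z) {v : V} (hv : v ∉ D.bag x)
    {y : ι} (hvy : v ∈ D.bag y) (hy : P y) : ∀ z, v ∈ D.bag z → P z := by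
  classical
  intro z hvz
  obtain ⟨p⟩ := D.tree.connected.preconnected y z
  refine p.toPath.1.apply_end_of_closed hP (fun a ha hax => hv ?_) hy
  exact hax ▸ D.conn v y z _ p.toPath.2 hvy hvz a ha

lemma forall_mem_bag_of_reachable {x : ι} {P : ι → Prop}
    (hP : ∀ ⦃y z⦄, D.T.Adj y z → y ≠ x → z ≠ x → P y → P z) {v w : V}
    (hvw : (deleteVerts G (D.bag x)).Reachable v w) (hv : ∀ y, v ∈ D.bag y → P y) :
    ∀ y, w ∈ D.bag y → P y := by
  rw [reachable_iff_reflTransGen] at hvw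
  induction hvw with
  | refl => exact hv
  | tail _ hadj ih =>
    obtain ⟨hG, -, hbS⟩ := hadj
    obtain ⟨y, hay, hby⟩ := D.edge_cover hG
    exact D.forall_mem_bag_of_mem_bag hP hbS hby (ih y hay)

lemma mem_confined_of_reachable {x y c : ι} (hcx : D.parent c = x) {v w : V}
    (hv : v ∉ D.bag x) (hvy : v ∈ D.bag y) (hcy : D.InSubtree c y)
    (hvw : (deleteVerts G (D.bag x)).Reachable v w) : w ∈ D.confined c := by
  have hclosed : ∀ ⦃y z⦄, D.T.Adj y z → y ≠ x → z ≠ x → D.InSubtree c y → D.InSubtree c z :=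
    fun _ _ hadj _ hz hy => D.inSubtree_of_adj_of_ne_parent hy hadj (hcx ▸ hz)
  exact D.forall_mem_bag_of_reachable hclosed hvw (D.forall_mem_bag_of_mem_bag hclosed hv hvy hcy)

lemma notMem_confined_of_reachable {x y : ι} {v w : V} (hv : v ∉ D.bag x)
    (hvy : v ∈ D.bag y) (hxy : ¬ D.InSubtree x y)
    (hvw : (deleteVerts G (D.bag x)).Reachable v w) : w ∉ D.confined x := by
  have hclosed : ∀ ⦃y z⦄, D.T.Adj y z → y ≠ x → z ≠ x →
      ¬ D.InSubtree x y → ¬ D.InSubtree x z :=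
    fun _ _ hadj _ hz hy hxz => hy (D.inSubtree_of_adj hxz hadj.symm hz)
  obtain ⟨z, hwz⟩ := D.vert_cover w
  exact fun hw => D.forall_mem_bag_of_reachable hclosed hvw
    (D.forall_mem_bag_of_mem_bag hclosed hv hvy hxy) z hwz (hw z hwz)

lemma exists_balanced_node [Finite ι] (W : Finset V) :
    ∃ x, W.card ≤ 2 * (↑W ∩ D.confined x).ncard ∧
      ∀ c, D.parent c = x → c ≠ x → 2 * (↑W ∩ D.confined c).ncard < W.card := by
  have hroot : D.root ∈ {x | W.card ≤ 2 * (↑W ∩ D.confined x).ncard} := by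
    have : ↑W ∩ D.confined D.root = ↑W :=
      Set.inter_eq_left.mpr fun _ _ y _ => D.inSubtree_root y
    simp only [Set.mem_ofPred_eq, this, Set.ncard_coe_finset]
    omega
  obtain ⟨x, hx, hmax⟩ := Set.exists_max_image _ D.depth (Set.toFinite _) ⟨_, hroot⟩
  refine ⟨x, hx, fun c hcx hc => ?_⟩
  by_contra! hheavy
  exact (hmax c hheavy).not_gt (D.depth_lt_depth_of_parent_eq hcx hc)

end RootedTD

theorem stmt3_general {V : Type} (G : SimpleGraph V) (k : ℕ)
    (htw : treewidthLE V G k) (W : Finset V) :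
    ∃ S : Finset V, S.card ≤ k + 1 ∧
      ∀ v, v ∉ S →
        2 * Set.ncard {w | w ∈ W ∧ w ∉ S ∧ (deleteVerts G S).Reachable v w} ≤ W.card := by
  obtain ⟨m, D, hbag⟩ := htw
  obtain ⟨x, hx, hchild⟩ := D.exists_balanced_node W
  refine ⟨D.bag x, hbag x, fun v hv => ?_⟩
  obtain ⟨y, hvy⟩ := D.vert_cover v
  have hWfin : (W : Set V).Finite := W.finite_toSet
  by_cases hxy : D.InSubtree x y
  · obtain ⟨c, hcx, hc, hcy⟩ := D.exists_child_inSubtree hxy fun h => hv (h ▸ hvy)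
    have hsub : {w | w ∈ W ∧ w ∉ D.bag x ∧ (deleteVerts G (D.bag x)).Reachable v w} ⊆
        ↑W ∩ D.confined c := fun w ⟨hwW, _, hvw⟩ =>
      ⟨hwW, D.mem_confined_of_reachable hcx hv hvy hcy hvw⟩
    have := Set.ncard_le_ncard hsub (hWfin.subset Set.inter_subset_left)
    have := hchild c hcx hc
    omega
  · have hsub : {w | w ∈ W ∧ w ∉ D.bag x ∧ (deleteVerts G (D.bag x)).Reachable v w} ⊆
        ↑W \ D.confined x := fun w ⟨hwW, _, hvw⟩ =>
      ⟨hwW, D.notMem_confined_of_reachable hv hvy hxy hvw⟩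
    have := Set.ncard_le_ncard hsub (hWfin.subset Set.sdiff_subset)
    have := Set.ncard_inter_add_ncard_sdiff_eq_ncard (↑W) (D.confined x) hWfin
    rw [Set.ncard_coe_finset] at this
    omega

/-- balanced separator lemma.  If G has treewidth at most k and W is a
set of vertices, there is a set S of at most k+1 vertices such that every connected
component of G - S contains at most |W|/2 vertices of W. -/
theorem stmt3 {V : Type} [Fintype V] [DecidableEq V] (G : SimpleGraph V) (k : ℕ)
    (htw : treewidthLE V G k) (W : Finset V) :
    ∃ S : Finset V, S.card ≤ k + 1 ∧
      ∀ v, v ∉ S →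
        2 * Set.ncard {w | w ∈ W ∧ w ∉ S ∧ (deleteVerts G S).Reachable v w} ≤ W.card :=
  stmt3_general G k htw W
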